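/- arXiv:2502.20153 — 2 statements merged into one kernel-verified Lean document; each statement's English description precedes it below -/
import Mathlib

section
/- Let {p_θ(w|z)} be a differentiable, strictly positive family of conditional pmfs on finite sets, and let P* be a target joint distribution on (Z,W) with P*(w|z) = p_{θ1}(w|z) at parameter θ1. Define the autoencoder-style joint P'(z,w) = q_θ(z|w)·p_θ(w|z) where q_θ(z|w) = p_θ(w|z)·π(z)/m_θ(w) with fixed prior π(z) > 0 and m_θ(w) = Σ_z p_θ(w|z)π(z). Then E_{(Z,W)∼P*}[∂/∂θ log P'(Z,W)] = −E_{(Z,W)∼P*}[∂/∂θ log m_θ(W)], which is in general nonzero (it vanishes iff the θ-derivative of the marginal m_θ has zero P*-expectation). -/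
/-!
Since `log P'(z,w) = 2 log p_θ(w|z) + log π(z) − log m_θ(w)`, the expected gradient splits into
twice the expected score of the decoder, which vanishes because `∑_w p_θ(w|z) = 1` for every `θ`,
and the residual `−E*[∂_θ log m_θ(W)]`.
-/

open Finset Real

theorem sum_deriv_eq_zero_of_sum_eq_one {ι : Type*} [Fintype ι] {p : ℝ → ι → ℝ} {θ₀ : ℝ}
    (hsum : ∀ θ, ∑ i, p θ i = 1) (hdiff : ∀ i, DifferentiableAt ℝ (fun θ => p θ i) θ₀) :
    ∑ i, deriv (fun θ => p θ i) θ₀ = 0 := by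
  rw [← deriv_fun_sum fun i _ => hdiff i]
  simp only [hsum, deriv_const]

theorem sum_mul_deriv_log_eq_zero_of_sum_eq_one {ι : Type*} [Fintype ι] {p : ℝ → ι → ℝ}
    {θ₀ : ℝ} (hpos : ∀ i, p θ₀ i ≠ 0) (hsum : ∀ θ, ∑ i, p θ i = 1)
    (hdiff : ∀ i, DifferentiableAt ℝ (fun θ => p θ i) θ₀) :
    ∑ i, p θ₀ i * deriv (fun θ => log (p θ i)) θ₀ = 0 := by
  simp only [deriv.log (hdiff _) (hpos _), mul_div_cancel₀ _ (hpos _)]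
  exact sum_deriv_eq_zero_of_sum_eq_one hsum hdiff

theorem deriv_log_bayes_mul {a m : ℝ → ℝ} {c θ₀ : ℝ} (ha : ∀ θ, a θ ≠ 0) (hm : ∀ θ, m θ ≠ 0)
    (hc : c ≠ 0) (hda : DifferentiableAt ℝ a θ₀) (hdm : DifferentiableAt ℝ m θ₀) :
    deriv (fun θ => log (a θ * c / m θ * a θ)) θ₀
      = 2 * deriv (fun θ => log (a θ)) θ₀ - deriv (fun θ => log (m θ)) θ₀ := by
  have hsplit : (fun θ => log (a θ * c / m θ * a θ))
      = fun θ => log (a θ) + log c - log (m θ) + log (a θ) := by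
    funext θ
    rw [log_mul (div_ne_zero (mul_ne_zero (ha θ) hc) (hm θ)) (ha θ),
      log_div (mul_ne_zero (ha θ) hc) (hm θ), log_mul (ha θ) hc]
  have hla := (hda.log (ha θ₀)).hasDerivAt
  have hlm := (hdm.log (hm θ₀)).hasDerivAt
  rw [hsplit, (((hla.add_const (log c)).fun_sub hlm).fun_add hla).deriv]
  ring

theorem stmt_8_general {𝒵 𝒲 : Type*} [Fintype 𝒵] [Fintype 𝒲]
    (p : ℝ → 𝒵 → 𝒲 → ℝ) (pri : 𝒵 → ℝ) (μ : 𝒵 → ℝ) (θ1 : ℝ)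
    (hp : ∀ θ z w, 0 < p θ z w) (hpsum : ∀ θ z, ∑ w, p θ z w = 1)
    (hdiff : ∀ z w, Differentiable ℝ (fun θ => p θ z w))
    (hpri : ∀ z, 0 < pri z) :
    (∑ z, ∑ w, (μ z * p θ1 z w) *
        deriv (fun θ =>
          Real.log ((p θ z w * pri z / (∑ z', p θ z' w * pri z')) * p θ z w)) θ1)
      = -(∑ z, ∑ w, (μ z * p θ1 z w) *
          deriv (fun θ => Real.log (∑ z', p θ z' w * pri z')) θ1) ∧
    ((∑ z, ∑ w, (μ z * p θ1 z w) *
        deriv (fun θ =>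
          Real.log ((p θ z w * pri z / (∑ z', p θ z' w * pri z')) * p θ z w)) θ1) = 0
      ↔ (∑ z, ∑ w, (μ z * p θ1 z w) *
          deriv (fun θ => Real.log (∑ z', p θ z' w * pri z')) θ1) = 0) := by
  have hgrad : (∑ z, ∑ w, (μ z * p θ1 z w) *
        deriv (fun θ =>
          Real.log ((p θ z w * pri z / (∑ z', p θ z' w * pri z')) * p θ z w)) θ1)
      = -(∑ z, ∑ w, (μ z * p θ1 z w) *
          deriv (fun θ => Real.log (∑ z', p θ z' w * pri z')) θ1) := by
    simp only [← sum_neg_distrib]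
    refine sum_congr rfl fun z _ => ?_
    have hm : ∀ θ w, ∑ z', p θ z' w * pri z' ≠ 0 := fun θ w =>
      (sum_pos (fun z' _ => mul_pos (hp θ z' w) (hpri z')) ⟨z, mem_univ z⟩).ne'
    have hdm : ∀ w, DifferentiableAt ℝ (fun θ => ∑ z', p θ z' w * pri z') θ1 := fun w =>
      DifferentiableAt.fun_sum fun z' _ => (hdiff z' w θ1).mul_const _
    have hscore := sum_mul_deriv_log_eq_zero_of_sum_eq_one (fun w => (hp θ1 z w).ne')
      (hpsum · z) (fun w => hdiff z w θ1)
    simp only [fun w => deriv_log_bayes_mul (fun θ => (hp θ z w).ne') (hm · w) (hpri z).ne'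
      (hdiff z w θ1) (hdm w)]
    calc ∑ w, μ z * p θ1 z w * (2 * deriv (fun θ => log (p θ z w)) θ1
            - deriv (fun θ => log (∑ z', p θ z' w * pri z')) θ1)
        = 2 * μ z * ∑ w, p θ1 z w * deriv (fun θ => log (p θ z w)) θ1
            - ∑ w, μ z * p θ1 z w * deriv (fun θ => log (∑ z', p θ z' w * pri z')) θ1 := by
          rw [mul_sum, ← sum_sub_distrib]
          exact sum_congr rfl fun w _ => by ring
      _ = _ := by rw [hscore, mul_zero, zero_sub, sum_neg_distrib]
  exact ⟨hgrad, by rw [hgrad, neg_eq_zero]⟩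

/-- Inequality part of Corollary 1 (Lemma C.2): for the autoencoder-style joint
`P'(z,w) = q_θ(z|w) · p_θ(w|z)` with Bayes encoder `q_θ(z|w) = p_θ(w|z)π(z)/m_θ(w)`,
the expected gradient under a target distribution `P*(z,w) = μ(z)·p_{θ1}(w|z)` (decoder
correctly specified) equals `−E*[∂_θ log m_θ(W)]`, hence vanishes iff that residual
term has zero expectation. -/
theorem stmt_8 {𝒵 𝒲 : Type*} [Fintype 𝒵] [Fintype 𝒲]
    (p : ℝ → 𝒵 → 𝒲 → ℝ) (pri : 𝒵 → ℝ) (μ : 𝒵 → ℝ) (θ1 : ℝ)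
    (hp : ∀ θ z w, 0 < p θ z w) (hpsum : ∀ θ z, ∑ w, p θ z w = 1)
    (hdiff : ∀ z w, Differentiable ℝ (fun θ => p θ z w))
    (hpri : ∀ z, 0 < pri z)
    (hμ : ∀ z, 0 ≤ μ z) (hμsum : ∑ z, μ z = 1) :
    (∑ z, ∑ w, (μ z * p θ1 z w) *
        deriv (fun θ =>
          Real.log ((p θ z w * pri z / (∑ z', p θ z' w * pri z')) * p θ z w)) θ1)
      = -(∑ z, ∑ w, (μ z * p θ1 z w) *
          deriv (fun θ => Real.log (∑ z', p θ z' w * pri z')) θ1) ∧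
    ((∑ z, ∑ w, (μ z * p θ1 z w) *
        deriv (fun θ =>
          Real.log ((p θ z w * pri z / (∑ z', p θ z' w * pri z')) * p θ z w)) θ1) = 0
      ↔ (∑ z, ∑ w, (μ z * p θ1 z w) *
          deriv (fun θ => Real.log (∑ z', p θ z' w * pri z')) θ1) = 0) :=
  stmt_8_general p pri μ θ1 hp hpsum hdiff hpri
end

section
/- Let D be the selection diagram with nodes S → Z, Z → W, Z → X, Z → Y, X → Y (interpreted as: for any pair of structural causal models agreeing on all mechanisms except possibly the distribution of Z). Then for the corresponding interventional distributions, p*(y | z, do(x)) = p(y | z, x): the z-specific causal effect is directly transportable. -/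
open Finset
open scoped Classical

/-- Proposition 1 (direct transportability of the z-specific causal effect): for two
discrete SCMs `Z := f_Z(U_Z)`, `W := f_W(Z,U_W)`, `X := f_X(Z,U_X)`,
`Y := f_Y(Z,X,U_Y)` sharing all mechanisms and noise distributions except possibly the
law of `Z` (`μZ` in the source, `μZ'` in the target), the target interventional
distribution satisfies `p*(y | z, do(x)) = p(y | z, x)`, the source observational
conditional. -/
theorem stmt_16 {UZ UW UX UY 𝒵 𝒲 𝒳 𝒴 : Type*}
    [Fintype UZ] [Fintype UW] [Fintype UX] [Fintype UY]
    (μZ μZ' : UZ → ℝ) (μW : UW → ℝ) (μX : UX → ℝ) (μY : UY → ℝ)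
    (hμZ : ∀ u, 0 ≤ μZ u) (hμZsum : ∑ u, μZ u = 1)
    (hμZ' : ∀ u, 0 ≤ μZ' u) (hμZ'sum : ∑ u, μZ' u = 1)
    (hμW : ∀ u, 0 ≤ μW u) (hμWsum : ∑ u, μW u = 1)
    (hμX : ∀ u, 0 ≤ μX u) (hμXsum : ∑ u, μX u = 1)
    (hμY : ∀ u, 0 ≤ μY u) (hμYsum : ∑ u, μY u = 1)
    (fZ : UZ → 𝒵) (fW : 𝒵 → UW → 𝒲) (fX : 𝒵 → UX → 𝒳) (fY : 𝒵 → 𝒳 → UY → 𝒴)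
    (z : 𝒵) (x : 𝒳) (y : 𝒴)
    (hsrc : 0 < ∑ uZ, ∑ uX, if fZ uZ = z ∧ fX (fZ uZ) uX = x then μZ uZ * μX uX else 0)
    (htgt : 0 < ∑ uZ, if fZ uZ = z then μZ' uZ else 0) :
    (∑ uZ, ∑ uY, if fZ uZ = z ∧ fY (fZ uZ) x uY = y then μZ' uZ * μY uY else 0) /
        (∑ uZ, if fZ uZ = z then μZ' uZ else 0) =
      (∑ uZ, ∑ uX, ∑ uY,
          if fZ uZ = z ∧ fX (fZ uZ) uX = x ∧ fY (fZ uZ) (fX (fZ uZ) uX) uY = y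
          then μZ uZ * μX uX * μY uY else 0) /
        (∑ uZ, ∑ uX, if fZ uZ = z ∧ fX (fZ uZ) uX = x then μZ uZ * μX uX else 0) := by

  set A : ℝ := ∑ uY, if fY z x uY = y then μY uY else 0 with hA
  have h1 : (∑ uZ, ∑ uY, if fZ uZ = z ∧ fY (fZ uZ) x uY = y then μZ' uZ * μY uY else 0)
      = (∑ uZ, if fZ uZ = z then μZ' uZ else 0) * A := by
    rw [Finset.sum_mul]
    refine Finset.sum_congr rfl fun uZ _ => ?_
    by_cases h : fZ uZ = z
    · subst h
      simp only [true_and, if_true, hA, Finset.mul_sum, mul_ite, mul_zero]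
    · simp [h]
  have h2 : (∑ uZ, ∑ uX, ∑ uY,
        if fZ uZ = z ∧ fX (fZ uZ) uX = x ∧ fY (fZ uZ) (fX (fZ uZ) uX) uY = y
        then μZ uZ * μX uX * μY uY else 0)
      = (∑ uZ, ∑ uX, if fZ uZ = z ∧ fX (fZ uZ) uX = x then μZ uZ * μX uX else 0) * A := by
    rw [Finset.sum_mul]
    refine Finset.sum_congr rfl fun uZ _ => ?_
    rw [Finset.sum_mul]
    refine Finset.sum_congr rfl fun uX _ => ?_
    by_cases h : fZ uZ = z ∧ fX (fZ uZ) uX = x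
    · obtain ⟨h1', h2'⟩ := h
      subst h1'; rw [h2']
      simp only [true_and, if_true, hA, Finset.mul_sum, mul_ite, mul_zero]
    · rw [if_neg h, zero_mul]
      exact Finset.sum_eq_zero fun uY _ => if_neg fun hc => h ⟨hc.1, hc.2.1⟩
  rw [h1, h2, mul_comm, mul_comm _ A, mul_div_assoc, mul_div_assoc,
    div_self (ne_of_gt htgt), div_self (ne_of_gt hsrc)]
end
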